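/- arXiv:1501.06813 — 5 statements merged into one kernel-verified Lean document; each statement's English description precedes it below -/
import Mathlib

section
/- Let ℓ ∈ ℝ² and let E(ℓ) = (ℓ_x, ℓ_x+1) × (ℓ_y−1, ℓ_y) be the open unit square with top-left corner ℓ. Suppose p is a point with p_y < ℓ_y whose unit-square label λ(p) = [p_x,p_x+1]×[p_y,p_y+1] (i) does not intersect the horizontal ray {(x, ℓ_y) : x ≤ ℓ_x}, and (ii) intersects some unit-square label λ(a) where a satisfies a_x < ℓ_x and a_y > ℓ_y. Then p ∈ E(ℓ). -/
/-- The closed axis-aligned unit-square label anchored at its lower-left corner `p`. -/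
def label (p : ℝ × ℝ) : Set (ℝ × ℝ) :=
  {z | p.1 ≤ z.1 ∧ z.1 ≤ p.1 + 1 ∧ p.2 ≤ z.2 ∧ z.2 ≤ p.2 + 1}

/-- The open unit square with lower-left corner `p` (the interior of `label p`). -/
def openSquare (p : ℝ × ℝ) : Set (ℝ × ℝ) :=
  {z | p.1 < z.1 ∧ z.1 < p.1 + 1 ∧ p.2 < z.2 ∧ z.2 < p.2 + 1}

/-- Euclidean distance in the plane. -/
noncomputable def edist2 (p q : ℝ × ℝ) : ℝ :=
  Real.sqrt ((p.1 - q.1) ^ 2 + (p.2 - q.2) ^ 2)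

/-- Horizontal leftward leader ray from `p` (slope θ = 0). -/
def ray0 (p : ℝ × ℝ) : Set (ℝ × ℝ) := {z | z.2 = p.2 ∧ z.1 ≤ p.1}

/-- The open unit square `E(ℓ)` with top-left corner `ℓ`. -/
def Eregion (ℓ : ℝ × ℝ) : Set (ℝ × ℝ) :=
  {z | ℓ.1 < z.1 ∧ z.1 < ℓ.1 + 1 ∧ ℓ.2 - 1 < z.2 ∧ z.2 < ℓ.2}

/-- The region `S(a,b)`: points in the horizontal slab strictly between the heights
of `a` and `b`, strictly left of both. -/
def slabS (a b : ℝ × ℝ) : Set (ℝ × ℝ) :=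
  {q | a.2 < q.2 ∧ q.2 < b.2 ∧ q.1 < a.1 ∧ q.1 < b.1}

theorem stmt3 (ℓ p a : ℝ × ℝ) (hp : p.2 < ℓ.2)
    (hray : label p ∩ ray0 ℓ = ∅)
    (ha : a.1 < ℓ.1 ∧ ℓ.2 < a.2)
    (hint : (label p ∩ label a).Nonempty) :
    p ∈ Eregion ℓ := by
  obtain ⟨z, ⟨hz1, hz2, hz3, hz4⟩, ⟨hw1, hw2, hw3, hw4⟩⟩ := hint
  have h1 : a.2 ≤ p.2 + 1 := le_trans hw3 hz4
  have h2 : p.1 ≤ a.1 + 1 := le_trans hz1 hw2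
  have h3 : ℓ.1 < p.1 := by
    by_contra h
    push_neg at h
    have : (p.1, ℓ.2) ∈ label p ∩ ray0 ℓ := by
      refine ⟨⟨le_refl _, by linarith, le_of_lt hp, ?_⟩, rfl, h⟩
      linarith [ha.2]
    rw [hray] at this
    exact this
  exact ⟨h3, by linarith [ha.1], by linarith [ha.2], hp⟩
end

section
/- Let ℓ, u, p ∈ ℝ² with ℓ_y < p_y < u_y, and use horizontal leftward leaders (rays in the −x direction). Suppose A is a set of points in the region S(ℓ,p) = {q : ℓ_y < q_y < p_y, q_x < ℓ_x, q_x < p_x} and B is a set of points in S(p,u) = {q : p_y < q_y < u_y, q_x < p_x, q_x < u_x}, and all unit-square labels of A ∪ B avoid the three horizontal rays of ℓ, p, u. Then no label of a point in A intersects a label of a point in B. -/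
theorem stmt5 (ℓ u p : ℝ × ℝ) (h1 : ℓ.2 < p.2) (h2 : p.2 < u.2)
    (A B : Set (ℝ × ℝ)) (hA : A ⊆ slabS ℓ p) (hB : B ⊆ slabS p u)
    (havoid : ∀ c ∈ A ∪ B,
      label c ∩ ray0 ℓ = ∅ ∧ label c ∩ ray0 p = ∅ ∧ label c ∩ ray0 u = ∅) :
    ∀ a ∈ A, ∀ b ∈ B, label a ∩ label b = ∅ := by
  intro a ha b hb
  obtain ⟨ha1, ha2, ha3, ha4⟩ := hA ha
  obtain ⟨hb1, hb2, hb3, hb4⟩ := hB hb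
  have hap := (havoid a (Or.inl ha)).2.1
  have hatop : a.2 + 1 < p.2 := by
    by_contra h
    push_neg at h
    have : (a.1, p.2) ∈ label a ∩ ray0 p := by
      refine ⟨⟨le_refl _, by linarith, le_of_lt ha2, h⟩, rfl, le_of_lt ha4⟩
    simp [hap] at this
  ext z
  simp only [Set.mem_inter_iff, Set.mem_empty_iff_false, iff_false]
  rintro ⟨⟨_, _, _, hz1⟩, ⟨_, _, hz2, _⟩⟩
  simp [label] at *
  linarith
end

section
/- Let θ ∈ (0, π/4) and let the leader of a point q be the ray from q in direction (−cos θ, sin θ) — i.e., going up-left with slope −tan θ relative to leftward direction. Let ℓ ∈ ℝ². If p is a point strictly below the leader line of ℓ whose unit-square label can intersect a unit-square label of some point a strictly above the leader line of ℓ and to the 'left' of ℓ (in rotated coordinates), with both labels avoiding ℓ's leader, then p lies in a region of width at most 2 and height at most 1, namely p ∈ (ℓ_x, ℓ_x + 2) × (ℓ_y − 1, ℓ_y) intersected with the half-plane below ℓ's leader line. -/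
/-!
Write `m = tan θ ∈ (0, 1)`, so the leader of `ℓ` is the graph of `x ↦ ℓ.2 + m (ℓ.1 - x)` over
`x ≤ ℓ.1`. Since `a` lies above the leader line and its label meets that of `p`, the leader
passes below the top-right corner of `label p`. A leader missing `label p` can then neither
start at or left of `label p` nor cross the height of its bottom edge, which puts `p` below
and to the right of `ℓ`. The point `a` lies above `ℓ` (it is above the leader line and
on the left side of the perpendicular through `ℓ`), so `p`, whose label touches that of `a`,
is less than `1` below `ℓ`, and `p.1 ≤ a.1 + 1 < ℓ.1 + m (a.2 - ℓ.2) + 1 < ℓ.1 + 2`.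
-/

def leaderRay (m : ℝ) (ℓ : ℝ × ℝ) : Set (ℝ × ℝ) :=
  {z | z.1 ≤ ℓ.1 ∧ z.2 = ℓ.2 + m * (ℓ.1 - z.1)}

lemma exists_param_of_mem_leaderRay_tan {θ : ℝ} (hc : 0 < Real.cos θ) {ℓ z : ℝ × ℝ}
    (hz : z ∈ leaderRay (Real.tan θ) ℓ) :
    ∃ t : ℝ, 0 ≤ t ∧ (ℓ.1 - t * Real.cos θ, ℓ.2 + t * Real.sin θ) = z := by
  obtain ⟨hz1, hz2⟩ := hz
  refine ⟨(ℓ.1 - z.1) / Real.cos θ, div_nonneg (by linarith) hc.le, Prod.ext ?_ ?_⟩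
  · dsimp only
    field_simp
    ring
  · simp only [hz2, Real.tan_eq_sin_div_cos]
    field_simp

lemma sub_lt_tan_mul_of_rotated_neg {θ : ℝ} (hc : 0 < Real.cos θ) {u v : ℝ}
    (h : u * Real.cos θ - v * Real.sin θ < 0) : u < Real.tan θ * v := by
  rw [Real.tan_eq_sin_div_cos, div_mul_eq_mul_div, lt_div_iff₀ hc]
  linarith

lemma label_inter_nonempty_bounds {p a : ℝ × ℝ} (h : (label p ∩ label a).Nonempty) :
    a.1 ≤ p.1 + 1 ∧ p.1 ≤ a.1 + 1 ∧ a.2 ≤ p.2 + 1 ∧ p.2 ≤ a.2 + 1 := by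
  obtain ⟨z, ⟨hp1, hp2, hp3, hp4⟩, ⟨ha1, ha2, ha3, ha4⟩⟩ := h
  exact ⟨ha1.trans hp2, hp1.trans ha2, ha3.trans hp4, hp3.trans ha4⟩

section Slope

variable {m : ℝ} {ℓ p : ℝ × ℝ}

/-- The leader meets `label p` at abscissa `min x₀ (p.1 + 1)`. -/
lemma leaderRay_inter_label_nonempty (hm : 0 ≤ m) {x₀ : ℝ} (hx₀ : x₀ ≤ ℓ.1) (hpx₀ : p.1 ≤ x₀)
    (hlo : p.2 ≤ ℓ.2 + m * (ℓ.1 - x₀)) (hhi : ℓ.2 + m * (ℓ.1 - x₀) ≤ p.2 + 1)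
    (hedge : ℓ.2 + m * (ℓ.1 - (p.1 + 1)) ≤ p.2 + 1) :
    (leaderRay m ℓ ∩ label p).Nonempty := by
  set x := min x₀ (p.1 + 1)
  refine ⟨(x, ℓ.2 + m * (ℓ.1 - x)), ⟨(min_le_left _ _).trans hx₀, rfl⟩, ?_⟩
  rcases min_cases x₀ (p.1 + 1) with ⟨hx, hle⟩ | ⟨hx, hlt⟩ <;> simp only [label, x, hx]
  · exact ⟨hpx₀, hle, hlo, hhi⟩
  · have : m * (ℓ.1 - x₀) ≤ m * (ℓ.1 - (p.1 + 1)) := by gcongr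
    exact ⟨by linarith, le_rfl, by linarith, hedge⟩

lemma snd_lt_of_disjoint_leaderRay (hm : 0 < m) (hmiss : Disjoint (leaderRay m ℓ) (label p))
    (hbelow : p.2 - ℓ.2 < -m * (p.1 - ℓ.1))
    (hedge : ℓ.2 + m * (ℓ.1 - (p.1 + 1)) ≤ p.2 + 1) : p.2 < ℓ.2 := by
  by_contra! h
  have hheight : ℓ.2 + m * (ℓ.1 - (ℓ.1 - (p.2 - ℓ.2) / m)) = p.2 := by
    field_simp
    ring
  have hx₀ : ℓ.1 - (p.2 - ℓ.2) / m ≤ ℓ.1 := by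
    have : 0 ≤ (p.2 - ℓ.2) / m := div_nonneg (by linarith) hm.le
    linarith
  have hpx₀ : p.1 ≤ ℓ.1 - (p.2 - ℓ.2) / m := by
    rw [le_sub_comm, div_le_iff₀ hm]
    linarith
  exact Set.not_disjoint_iff_nonempty_inter.mpr (leaderRay_inter_label_nonempty hm.le hx₀ hpx₀
    hheight.ge (by rw [hheight]; linarith) hedge) hmiss

lemma fst_lt_of_disjoint_leaderRay (hm : 0 ≤ m) (hmiss : Disjoint (leaderRay m ℓ) (label p))
    (hlo : p.2 ≤ ℓ.2) (hhi : ℓ.2 ≤ p.2 + 1)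
    (hedge : ℓ.2 + m * (ℓ.1 - (p.1 + 1)) ≤ p.2 + 1) : ℓ.1 < p.1 := by
  by_contra! h
  exact Set.not_disjoint_iff_nonempty_inter.mpr (leaderRay_inter_label_nonempty hm le_rfl h
    (by simpa using hlo) (by simpa using hhi) hedge) hmiss

lemma snd_lt_of_above_of_left {a : ℝ × ℝ} (hm : 0 ≤ m)
    (habove : a.2 - ℓ.2 > -m * (a.1 - ℓ.1)) (hleft : a.1 - ℓ.1 < m * (a.2 - ℓ.2)) :
    ℓ.2 < a.2 := by
  by_contra! h
  nlinarith [mul_le_mul_of_nonneg_left hleft.le hm, mul_nonneg (sq_nonneg m) (sub_nonneg.mpr h)]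

theorem mem_bottom_region_of_slope {a : ℝ × ℝ} (hm0 : 0 < m) (hm1 : m ≤ 1)
    (hbelow : p.2 - ℓ.2 < -m * (p.1 - ℓ.1))
    (habove : a.2 - ℓ.2 > -m * (a.1 - ℓ.1)) (hleft : a.1 - ℓ.1 < m * (a.2 - ℓ.2))
    (hint : (label p ∩ label a).Nonempty) (hmiss : Disjoint (leaderRay m ℓ) (label p)) :
    ℓ.1 < p.1 ∧ p.1 < ℓ.1 + 2 ∧ ℓ.2 - 1 < p.2 ∧ p.2 < ℓ.2 := by
  obtain ⟨hx1, hx2, hy1, hy2⟩ := label_inter_nonempty_bounds hint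
  have ha : ℓ.2 < a.2 := snd_lt_of_above_of_left hm0.le habove hleft
  have hedge : ℓ.2 + m * (ℓ.1 - (p.1 + 1)) ≤ p.2 + 1 := by
    linarith [mul_le_mul_of_nonneg_left hx1 hm0.le]
  have hp2 : p.2 < ℓ.2 := snd_lt_of_disjoint_leaderRay hm0 hmiss hbelow hedge
  have hp1 : ℓ.1 < p.1 := fst_lt_of_disjoint_leaderRay hm0.le hmiss hp2.le (by linarith) hedge
  have hrise : m * (a.2 - ℓ.2) < 1 :=
    (mul_le_of_le_one_left (by linarith) hm1).trans_lt (by linarith)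
  exact ⟨hp1, by linarith, by linarith, hp2⟩

end Slope

theorem stmt8_general (θ : ℝ) (hθ1 : 0 < θ) (hθ2 : θ < Real.pi / 4) (ℓ p a : ℝ × ℝ)
    (hbelow : p.2 - ℓ.2 < -Real.tan θ * (p.1 - ℓ.1))
    (habove : a.2 - ℓ.2 > -Real.tan θ * (a.1 - ℓ.1))
    (hleft : (a.1 - ℓ.1) * Real.cos θ - (a.2 - ℓ.2) * Real.sin θ < 0)
    (hint : (label p ∩ label a).Nonempty)
    (hpr : ∀ t : ℝ, 0 ≤ t → (ℓ.1 - t * Real.cos θ, ℓ.2 + t * Real.sin θ) ∉ label p) :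
    (ℓ.1 < p.1 ∧ p.1 < ℓ.1 + 2 ∧ ℓ.2 - 1 < p.2 ∧ p.2 < ℓ.2) ∧
      p.2 - ℓ.2 < -Real.tan θ * (p.1 - ℓ.1) := by
  have hc : 0 < Real.cos θ := Real.cos_pos_of_mem_Ioo ⟨by linarith [Real.pi_pos], by linarith⟩
  have ht0 : 0 < Real.tan θ := Real.tan_pos_of_pos_of_lt_pi_div_two hθ1 (by linarith)
  have ht1 : Real.tan θ ≤ 1 := by
    rw [← Real.tan_pi_div_four]
    exact (Real.tan_lt_tan_of_nonneg_of_lt_pi_div_two hθ1.le (by linarith) hθ2).le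
  have hmiss : Disjoint (leaderRay (Real.tan θ) ℓ) (label p) := by
    refine Set.disjoint_left.mpr fun z hz hzp => ?_
    obtain ⟨t, ht, rfl⟩ := exists_param_of_mem_leaderRay_tan hc hz
    exact hpr t ht hzp
  exact ⟨mem_bottom_region_of_slope ht0 ht1 hbelow habove
    (sub_lt_tan_mul_of_rotated_neg hc hleft) hint hmiss, hbelow⟩

theorem stmt8 (θ : ℝ) (hθ1 : 0 < θ) (hθ2 : θ < Real.pi / 4) (ℓ p a : ℝ × ℝ)
    (hbelow : p.2 - ℓ.2 < -Real.tan θ * (p.1 - ℓ.1))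
    (habove : a.2 - ℓ.2 > -Real.tan θ * (a.1 - ℓ.1))
    (hleft : (a.1 - ℓ.1) * Real.cos θ - (a.2 - ℓ.2) * Real.sin θ < 0)
    (hint : (label p ∩ label a).Nonempty)
    (hpr : ∀ t : ℝ, 0 ≤ t → (ℓ.1 - t * Real.cos θ, ℓ.2 + t * Real.sin θ) ∉ label p)
    (har : ∀ t : ℝ, 0 ≤ t → (ℓ.1 - t * Real.cos θ, ℓ.2 + t * Real.sin θ) ∉ label a) :
    (ℓ.1 < p.1 ∧ p.1 < ℓ.1 + 2 ∧ ℓ.2 - 1 < p.2 ∧ p.2 < ℓ.2) ∧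
      p.2 - ℓ.2 < -Real.tan θ * (p.1 - ℓ.1) :=
  stmt8_general θ hθ1 hθ2 ℓ p a hbelow habove hleft hint hpr
end

section
/- Let P be a finite set of points in ℝ² such that for every p ∈ P the open unit square (p_x, p_x+1) × (p_y, p_y+1) contains no other point of P, and the pairwise distances in P are at least d > 0. Then for any axis-aligned unit square W, |P ∩ W| ≤ 2·(⌈√2 / d⌉ + 1). -/
lemma sqrt_le_abs_add (a b : ℝ) : Real.sqrt (a^2 + b^2) ≤ |a| + |b| := by
  have h : Real.sqrt (a^2 + b^2) ≤ Real.sqrt ((|a| + |b|)^2) := by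
    apply Real.sqrt_le_sqrt
    nlinarith [sq_abs a, sq_abs b, mul_nonneg (abs_nonneg a) (abs_nonneg b)]
  rwa [Real.sqrt_sq (by positivity)] at h

lemma key (w p q : ℝ × ℝ) (d : ℝ)
    (hpW : w.1 ≤ p.1 ∧ p.1 ≤ w.1 + 1 ∧ w.2 ≤ p.2 ∧ p.2 ≤ w.2 + 1)
    (hqW : w.1 ≤ q.1 ∧ q.1 ≤ w.1 + 1 ∧ w.2 ≤ q.2 ∧ q.2 ≤ w.2 + 1)
    (hop : q ∉ openSquare p)
    (hdist : d ≤ Real.sqrt ((p.1 - q.1) ^ 2 + (p.2 - q.2) ^ 2))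
    (hx : p.1 ≤ q.1)
    (hfar : |(p.1 - p.2) - (q.1 - q.2)| < d) :
    (p.1 = w.1 ∧ p.2 < w.2 + d) ∨ (p.2 = w.2 ∧ p.1 < w.1 + d) := by
  obtain ⟨hp1, hp2, hp3, hp4⟩ := hpW
  obtain ⟨hq1, hq2, hq3, hq4⟩ := hqW
  rw [abs_lt] at hfar
  obtain ⟨hfar1, hfar2⟩ := hfar
  rcases le_or_gt q.2 p.2 with h | h
  · exfalso
    have h1 : Real.sqrt ((p.1 - q.1) ^ 2 + (p.2 - q.2) ^ 2) ≤ |p.1 - q.1| + |p.2 - q.2| :=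
      sqrt_le_abs_add _ _
    rw [abs_of_nonpos (by linarith), abs_of_nonneg (by linarith)] at h1
    linarith
  · rcases eq_or_lt_of_le hx with heq | hlt
    · exfalso
      have e : (p.1 - q.1) ^ 2 + (p.2 - q.2) ^ 2 = (q.2 - p.2) ^ 2 := by rw [heq]; ring
      rw [e, Real.sqrt_sq (by linarith)] at hdist
      linarith
    · have hno : ¬ (p.1 < q.1 ∧ q.1 < p.1 + 1 ∧ p.2 < q.2 ∧ q.2 < p.2 + 1) := hop
      by_cases h1 : q.1 < p.1 + 1
      · by_cases h2 : q.2 < p.2 + 1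
        · exact absurd ⟨hlt, h1, h, h2⟩ hno
        · push_neg at h2
          exact Or.inr ⟨by linarith, by linarith⟩
      · push_neg at h1
        exact Or.inl ⟨by linarith, by linarith⟩

set_option maxHeartbeats 1000000 in
theorem stmt17 (P : Finset (ℝ × ℝ)) (d : ℝ) (hd : 0 < d)
    (hopen : ∀ p ∈ P, ∀ q ∈ P, q ≠ p → q ∉ openSquare p)
    (hdist : ∀ p ∈ P, ∀ q ∈ P, p ≠ q → d ≤ edist2 p q)
    (w : ℝ × ℝ) :
    (P.filter fun p => w.1 ≤ p.1 ∧ p.1 ≤ w.1 + 1 ∧ w.2 ≤ p.2 ∧ p.2 ≤ w.2 + 1).card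
      ≤ 2 * (⌈Real.sqrt 2 / d⌉₊ + 1) := by
  classical
  set Q := P.filter (fun p => w.1 ≤ p.1 ∧ p.1 ≤ w.1 + 1 ∧ w.2 ≤ p.2 ∧ p.2 ≤ w.2 + 1) with hQdef
  have hQW : ∀ p ∈ Q, w.1 ≤ p.1 ∧ p.1 ≤ w.1 + 1 ∧ w.2 ≤ p.2 ∧ p.2 ≤ w.2 + 1 :=
    fun p hp => (Finset.mem_filter.mp hp).2
  have hQP : ∀ p ∈ Q, p ∈ P := fun p hp => (Finset.mem_filter.mp hp).1
  have hQdist : ∀ p ∈ Q, ∀ q ∈ Q, p ≠ q →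
      d ≤ Real.sqrt ((p.1 - q.1) ^ 2 + (p.2 - q.2) ^ 2) := by
    intro p hp q hq hne
    have := hdist p (hQP p hp) q (hQP q hq) hne
    rwa [edist2] at this
  have hsqrt2 : (0:ℝ) < Real.sqrt 2 := Real.sqrt_pos.mpr (by norm_num)
  have hceil1 : 1 ≤ ⌈Real.sqrt 2 / d⌉₊ := Nat.ceil_pos.mpr (div_pos hsqrt2 hd)
  by_cases hcase : d ≤ 2 * (Real.sqrt 2 - 1)
  · -- small d: staircase argument
    set S1a := Q.filter (fun p => p.1 = w.1 ∧ p.2 < w.2 + d) with hS1a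
    set S1b := Q.filter (fun p => p.2 = w.2 ∧ p.1 < w.1 + d) with hS1b
    set X := S1a ∪ S1b with hX
    set M := Q \ X with hM
    -- each corner set has at most one point
    have cardS1a : S1a.card ≤ 1 := by
      rw [Finset.card_le_one]
      intro a ha b hb
      by_contra hne
      obtain ⟨haQ, ha1, ha2⟩ := Finset.mem_filter.mp ha
      obtain ⟨hbQ, hb1, hb2⟩ := Finset.mem_filter.mp hb
      obtain ⟨_, _, ha3, _⟩ := hQW a haQ
      obtain ⟨_, _, hb3, _⟩ := hQW b hbQ
      have hd' := hQdist a haQ b hbQ hne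
      have e : (a.1 - b.1) ^ 2 + (a.2 - b.2) ^ 2 = (a.2 - b.2) ^ 2 := by
        rw [ha1, hb1]; ring
      rw [e, Real.sqrt_sq_eq_abs] at hd'
      have : |a.2 - b.2| < d := abs_lt.mpr ⟨by linarith, by linarith⟩
      linarith
    have cardS1b : S1b.card ≤ 1 := by
      rw [Finset.card_le_one]
      intro a ha b hb
      by_contra hne
      obtain ⟨haQ, ha1, ha2⟩ := Finset.mem_filter.mp ha
      obtain ⟨hbQ, hb1, hb2⟩ := Finset.mem_filter.mp hb
      obtain ⟨ha3, _, _, _⟩ := hQW a haQ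
      obtain ⟨hb3, _, _, _⟩ := hQW b hbQ
      have hd' := hQdist a haQ b hbQ hne
      have e : (a.1 - b.1) ^ 2 + (a.2 - b.2) ^ 2 = (a.1 - b.1) ^ 2 := by
        rw [ha1, hb1]; ring
      rw [e, Real.sqrt_sq_eq_abs] at hd'
      have : |a.1 - b.1| < d := abs_lt.mpr ⟨by linarith, by linarith⟩
      linarith
    have cardX : X.card ≤ 2 := le_trans (Finset.card_union_le _ _) (by omega)
    -- card of M via the floor injection
    have cardM : M.card ≤ ⌊2 / d⌋₊ + 1 := by
      have : M.card ≤ (Finset.range (⌊2 / d⌋₊ + 1)).card := by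
        apply Finset.card_le_card_of_injOn
          (fun p => ⌊(p.1 - p.2 - w.1 + w.2 + 1) / d⌋₊)
        · intro p hp
          have hpQ : p ∈ Q := (Finset.mem_sdiff.mp hp).1
          obtain ⟨hp1, hp2, hp3, hp4⟩ := hQW p hpQ
          rw [Finset.mem_coe, Finset.mem_range, Nat.lt_succ_iff]
          exact Nat.floor_le_floor ((div_le_div_iff_of_pos_right hd).mpr (by linarith))
        · intro p hp q hq heq
          by_contra hne
          have hpQ : p ∈ Q := (Finset.mem_sdiff.mp hp).1
          have hqQ : q ∈ Q := (Finset.mem_sdiff.mp hq).1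
          have hpX : p ∉ X := (Finset.mem_sdiff.mp hp).2
          have hqX : q ∉ X := (Finset.mem_sdiff.mp hq).2
          obtain ⟨hp1, hp2, hp3, hp4⟩ := hQW p hpQ
          obtain ⟨hq1, hq2, hq3, hq4⟩ := hQW q hqQ
          set a := (p.1 - p.2 - w.1 + w.2 + 1) / d with hadef
          set b := (q.1 - q.2 - w.1 + w.2 + 1) / d with hbdef
          have ha0 : 0 ≤ a := div_nonneg (by linarith) hd.le
          have hb0 : 0 ≤ b := div_nonneg (by linarith) hd.le
          have heq' : ⌊a⌋₊ = ⌊b⌋₊ := heq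
          have hab1 : a < b + 1 := by
            have h := Nat.lt_floor_add_one a
            rw [heq'] at h
            have h' := Nat.floor_le hb0
            linarith
          have hab2 : b < a + 1 := by
            have h := Nat.lt_floor_add_one b
            rw [← heq'] at h
            have h' := Nat.floor_le ha0
            linarith
          have hfd : |(p.1 - p.2) - (q.1 - q.2)| < d := by
            have e : (p.1 - p.2) - (q.1 - q.2) = (a - b) * d := by
              rw [hadef, hbdef]; field_simp; ring
            rw [e, abs_lt]
            constructor <;> nlinarith
          rcases le_total p.1 q.1 with hx | hx
          · have hres := key w p q d ⟨hp1, hp2, hp3, hp4⟩ ⟨hq1, hq2, hq3, hq4⟩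
              (hopen p (hQP p hpQ) q (hQP q hqQ) (Ne.symm hne))
              (hQdist p hpQ q hqQ hne) hx hfd
            apply hpX
            rw [hX, Finset.mem_union]
            rcases hres with h | h
            · exact Or.inl (Finset.mem_filter.mpr ⟨hpQ, h⟩)
            · exact Or.inr (Finset.mem_filter.mpr ⟨hpQ, h⟩)
          · have hfd' : |(q.1 - q.2) - (p.1 - p.2)| < d := by rwa [abs_sub_comm]
            have hres := key w q p d ⟨hq1, hq2, hq3, hq4⟩ ⟨hp1, hp2, hp3, hp4⟩
              (hopen q (hQP q hqQ) p (hQP p hpQ) hne)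
              (hQdist q hqQ p hpQ (Ne.symm hne)) hx hfd'
            apply hqX
            rw [hX, Finset.mem_union]
            rcases hres with h | h
            · exact Or.inl (Finset.mem_filter.mpr ⟨hqQ, h⟩)
            · exact Or.inr (Finset.mem_filter.mpr ⟨hqQ, h⟩)
      simpa using this
    -- combine
    have hQle : Q.card ≤ M.card + X.card := by
      have h1 : M.card + X.card = (Q ∪ X).card := Finset.card_sdiff_add_card Q X
      have h2 : Q.card ≤ (Q ∪ X).card := Finset.card_le_card Finset.subset_union_left
      omega
    have harith : ⌊2 / d⌋₊ + 1 ≤ 2 * ⌈Real.sqrt 2 / d⌉₊ := by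
      have h1 : (⌊2 / d⌋₊ : ℝ) ≤ 2 / d := Nat.floor_le (by positivity)
      have h2 : Real.sqrt 2 / d ≤ (⌈Real.sqrt 2 / d⌉₊ : ℝ) := Nat.le_ceil _
      have h3 : 2 / d + 1 ≤ 2 * (Real.sqrt 2 / d) := by
        rw [← sub_nonneg]
        have e : 2 * (Real.sqrt 2 / d) - (2 / d + 1) = (2 * Real.sqrt 2 - 2 - d) / d := by
          field_simp
          ring
        rw [e]
        exact div_nonneg (by linarith) (le_of_lt hd)
      have : ((⌊2 / d⌋₊ + 1 : ℕ) : ℝ) ≤ ((2 * ⌈Real.sqrt 2 / d⌉₊ : ℕ) : ℝ) := by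
        push_cast
        linarith
      exact_mod_cast this
    omega
  · -- large d: at most 4 points
    push_neg at hcase
    have hcard4 : Q.card ≤ 4 := by
      have : Q.card ≤ (Finset.univ : Finset (Bool × Bool)).card := by
        apply Finset.card_le_card_of_injOn
          (fun p => (decide (p.1 ≤ w.1 + 1/2), decide (p.2 ≤ w.2 + 1/2)))
        · intro a _; exact Finset.mem_univ _
        · intro p hp q hq heq
          by_contra hne
          obtain ⟨hp1, hp2, hp3, hp4⟩ := hQW p hp
          obtain ⟨hq1, hq2, hq3, hq4⟩ := hQW q hq
          have h1 : (p.1 ≤ w.1 + 1/2) ↔ (q.1 ≤ w.1 + 1/2) := by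
            have := congrArg Prod.fst heq
            simpa [decide_eq_decide] using this
          have h2 : (p.2 ≤ w.2 + 1/2) ↔ (q.2 ≤ w.2 + 1/2) := by
            have := congrArg Prod.snd heq
            simpa [decide_eq_decide] using this
          have hxb : (p.1 - q.1)^2 ≤ (1/2)^2 := by
            by_cases hb : p.1 ≤ w.1 + 1/2
            · have := h1.mp hb; nlinarith
            · push_neg at hb
              have := h1.not.mp (not_le.mpr hb)
              push_neg at this; nlinarith
          have hyb : (p.2 - q.2)^2 ≤ (1/2)^2 := by
            by_cases hb : p.2 ≤ w.2 + 1/2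
            · have := h2.mp hb; nlinarith
            · push_neg at hb
              have := h2.not.mp (not_le.mpr hb)
              push_neg at this; nlinarith
          have hdd := hQdist p hp q hq hne
          have hle : Real.sqrt ((p.1 - q.1) ^ 2 + (p.2 - q.2) ^ 2) ≤ Real.sqrt (1/2) := by
            apply Real.sqrt_le_sqrt; nlinarith
          have h12 : Real.sqrt (1/2) ≤ 0.71 := by
            rw [show (0.71:ℝ) = Real.sqrt (0.71^2) by rw [Real.sqrt_sq]; norm_num]
            apply Real.sqrt_le_sqrt; norm_num
          have hs2 : (1.41:ℝ) ≤ Real.sqrt 2 := by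
            nlinarith [Real.sq_sqrt (by norm_num : (2:ℝ) ≥ 0), Real.sqrt_nonneg 2]
          linarith
      simpa using this
    calc Q.card ≤ 4 := hcard4
      _ ≤ 2 * (⌈Real.sqrt 2 / d⌉₊ + 1) := by omega
end

section
/- Let ℓ ∈ ℝ² and let Λ be a family of pairwise interior-disjoint closed axis-aligned unit squares, each anchored (lower-left corner) at a point strictly inside the open region E(ℓ) = (ℓ_x, ℓ_x+1) × (ℓ_y−1, ℓ_y). Suppose each square in Λ intersects the open segment s = {(x, ℓ_y) : ℓ_x < x < ℓ_x+1}. Then |Λ| ≤ 1. -/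
theorem stmt19 (ℓ : ℝ × ℝ) (A : Set (ℝ × ℝ))
    (hA : ∀ q ∈ A, q ∈ Eregion ℓ)
    (hseg : ∀ q ∈ A, ∃ x : ℝ, ℓ.1 < x ∧ x < ℓ.1 + 1 ∧ ((x, ℓ.2) : ℝ × ℝ) ∈ label q)
    (hdisj : ∀ q ∈ A, ∀ r ∈ A, q ≠ r → openSquare q ∩ openSquare r = ∅) :
    A.Subsingleton := by
  intro q hq r hr
  by_contra hne
  obtain ⟨hq1, hq2, hq3, hq4⟩ := hA q hq
  obtain ⟨hr1, hr2, hr3, hr4⟩ := hA r hr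
  obtain ⟨xq, _, _, _, _, _, hq5⟩ := hseg q hq
  obtain ⟨xr, _, _, _, _, _, hr5⟩ := hseg r hr
  have hd := hdisj q hq r hr hne
  set x : ℝ := (max q.1 r.1 + (ℓ.1 + 1)) / 2 with hx
  set y : ℝ := (max q.2 r.2 + ℓ.2) / 2 with hy
  simp only [label] at hq5 hr5
  have h1 := le_max_left q.1 r.1
  have h2 := le_max_right q.1 r.1
  have h3 := max_lt hq2 hr2
  have h4 := le_max_left q.2 r.2
  have h5 := le_max_right q.2 r.2
  have h6 := max_lt hq4 hr4
  have hmem : (x, y) ∈ openSquare q ∩ openSquare r :=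
    ⟨⟨by simp only [hx]; linarith, by simp only [hx]; linarith,
      by simp only [hy]; linarith, by simp only [hy]; linarith⟩,
     ⟨by simp only [hx]; linarith, by simp only [hx]; linarith,
      by simp only [hy]; linarith, by simp only [hy]; linarith⟩⟩
  rw [hd] at hmem
  exact hmem
end
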